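/- Let J ⊆ K⟨X_1,…,X_n⟩ be any two-sided ideal containing the anti-commutator ideal C. Then there exists d ≥ 0 such that in_{≺_t}(J) contains every word of length ≥ d; consequently in_{≺_t}(J) is generated by its elements of degree < d and is finitely generated. -/

import Mathlib

open scoped BigOperators

/-- Words in the letters `X_1, …, X_n`: the free monoid on `Fin n`. -/
abbrev Word (n : ℕ) := FreeMonoid (Fin n)

/-- The free associative algebra `K⟨X_1,…,X_n⟩`, as the monoid algebra of the free monoid. -/
abbrev FA (K : Type) [Field K] (n : ℕ) := MonoidAlgebra K (Word n)

/-- The word `w`, viewed as an element of `K⟨X_1,…,X_n⟩`. -/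
noncomputable def ofW (K : Type) [Field K] {n : ℕ} (w : Word n) : FA K n :=
  MonoidAlgebra.of K (Word n) w

/-- The variable `X_i`. -/
noncomputable def Xv (K : Type) [Field K] {n : ℕ} (i : Fin n) : FA K n :=
  ofW K (FreeMonoid.of i)

/-- The set of anti-commutators `X_iX_j + X_jX_i`, `i ≤ j`. -/
def antiCommSet (K : Type) [Field K] (n : ℕ) : Set (FA K n) :=
  { f | ∃ i j : Fin n, i ≤ j ∧ f = Xv K i * Xv K j + Xv K j * Xv K i }

/-- The anti-commutator ideal `C`. -/
noncomputable def antiCommIdeal (K : Type) [Field K] (n : ℕ) : TwoSidedIdeal (FA K n) :=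
  TwoSidedIdeal.span (antiCommSet K n)

/-- The exterior algebra `E(V)` as the quotient of `K⟨X_1,…,X_n⟩` by `C`. -/
abbrev EV (K : Type) [Field K] (n : ℕ) := (antiCommIdeal K n).ringCon.Quotient

/-- The quotient map `π : K⟨X_1,…,X_n⟩ → E(V)`. -/
noncomputable def piE (K : Type) [Field K] (n : ℕ) : FA K n →+* EV K n :=
  RingCon.mk' _

noncomputable instance (K : Type) [Field K] (n : ℕ) : Module K (EV K n) :=
  { (inferInstance : DistribMulAction K (EV K n)) with
    add_smul := fun a b f => by
      obtain ⟨x, rfl⟩ := Quotient.mk''_surjective f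
      show (((a + b) • x : FA K n) : EV K n) = ((a • x : FA K n) : EV K n) + ((b • x : FA K n) : EV K n)
      rw [← RingCon.coe_add, add_smul]
    zero_smul := fun f => by
      obtain ⟨x, rfl⟩ := Quotient.mk''_surjective f
      show (((0 : K) • x : FA K n) : EV K n) = ((0 : FA K n) : EV K n)
      rw [zero_smul] }

/-- The sorted word associated to a finite set of indices. -/
def wordOf {n : ℕ} (A : Finset (Fin n)) : Word n :=
  FreeMonoid.ofList (A.sort (· ≤ ·))

/-- The square-free monomial `x_A ∈ E(V)`. -/
noncomputable def xF (K : Type) [Field K] {n : ℕ} (A : Finset (Fin n)) : EV K n :=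
  piE K n (ofW K (wordOf A))

/-- A monoid well-order on the free commutative monoid on `x_1,…,x_n`
(identified additively with `Fin n →₀ ℕ`): a total, well-founded, translation
invariant strict order. -/
structure IsCommMonoidWellOrder (n : ℕ) (r : (Fin n →₀ ℕ) → (Fin n →₀ ℕ) → Prop) : Prop where
  trans : Transitive r
  irrefl : ∀ a, ¬ r a a
  total : ∀ a b, r a b ∨ a = b ∨ r b a
  wf : WellFounded r
  mul_compat : ∀ a b c, r a b → r (a + c) (b + c)

/-- A monoid well-order on the free monoid `⟨X_1,…,X_n⟩`. -/
structure IsMonoidWellOrder (n : ℕ) (r : Word n → Word n → Prop) : Prop where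
  trans : Transitive r
  irrefl : ∀ a, ¬ r a a
  total : ∀ a b, r a b ∨ a = b ∨ r b a
  wf : WellFounded r
  mul_compat : ∀ a b p q, r a b → r (p * a * q) (p * b * q)

/-- A finite set of indices, viewed as a square-free element of the free
commutative monoid. -/
noncomputable def sqMon {n : ℕ} (A : Finset (Fin n)) : Fin n →₀ ℕ :=
  Multiset.toFinsupp (A.val)

/-- The restriction `≺_e` of the order `≺_s` (given by `es`) to square-free monomials,
identified with finite subsets of `{1,…,n}`. -/
def precE {n : ℕ} (es : (Fin n →₀ ℕ) → (Fin n →₀ ℕ) → Prop)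
    (A B : Finset (Fin n)) : Prop :=
  es (sqMon A) (sqMon B)

/-- The degree-lexicographic order on words, with `X_1 < X_2 < ⋯ < X_n`. -/
def degLex {n : ℕ} (M N : Word n) : Prop :=
  (FreeMonoid.toList M).length < (FreeMonoid.toList N).length ∨
    ((FreeMonoid.toList M).length = (FreeMonoid.toList N).length ∧
      List.Lex (· < ·) (FreeMonoid.toList M) (FreeMonoid.toList N))

/-- The set of letters of a word. -/
def lettersOf {n : ℕ} (M : Word n) : Finset (Fin n) :=
  (FreeMonoid.toList M).toFinset

/-- A word is square-free iff no letter is repeated; equivalently `π(M) ≠ 0` in `E(V)`. -/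
def SqFreeWord {n : ℕ} (M : Word n) : Prop :=
  (FreeMonoid.toList M).Nodup

/-- The order `≺_t` on words: square-free words are compared first by the `≺_e`-order on
their underlying square-free commutative monomials, ties broken degree-lexicographically;
words mapping to `0` in the exterior algebra are compared degree-lexicographically. -/
def precT {n : ℕ} (es : (Fin n →₀ ℕ) → (Fin n →₀ ℕ) → Prop) (M N : Word n) : Prop :=
  (SqFreeWord M ∧ SqFreeWord N ∧
    (precE es (lettersOf M) (lettersOf N) ∨ (lettersOf M = lettersOf N ∧ degLex M N)))
  ∨ ((¬ SqFreeWord M ∨ ¬ SqFreeWord N) ∧ degLex M N)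

/-- `m` is the `r`-largest word occurring in `f` with nonzero coefficient. -/
def IsLeadWord {K : Type} [Field K] {n : ℕ} (r : Word n → Word n → Prop)
    (f : FA K n) (m : Word n) : Prop :=
  m ∈ f.coeff.support ∧ ∀ m' ∈ f.coeff.support, m' ≠ m → r m' m

/-- The initial ideal `in_r(J)` of a two-sided ideal `J ⊆ K⟨X_1,…,X_n⟩`: the two-sided
ideal generated by the leading words of the nonzero elements of `J`. -/
noncomputable def inIdeal {K : Type} [Field K] {n : ℕ} (r : Word n → Word n → Prop)
    (J : TwoSidedIdeal (FA K n)) : TwoSidedIdeal (FA K n) :=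
  TwoSidedIdeal.span { g | ∃ f m, f ∈ J ∧ f ≠ 0 ∧ IsLeadWord r f m ∧ g = ofW K m }

/-- `G` is a Gröbner basis of `J` w.r.t. `r`: `G` consists of nonzero elements of `J`
whose leading words generate `in_r(J)`. -/
def IsGB {K : Type} [Field K] {n : ℕ} (r : Word n → Word n → Prop)
    (J : TwoSidedIdeal (FA K n)) (G : Set (FA K n)) : Prop :=
  (∀ g ∈ G, g ∈ J ∧ g ≠ 0) ∧
  TwoSidedIdeal.span { h | ∃ g ∈ G, ∃ m, IsLeadWord r g m ∧ h = ofW K m } = inIdeal r J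

/-- `G` is a minimal Gröbner basis: no leading word of an element of `G` is a subword
(factor) of the leading word of another element. -/
def IsMinGB {K : Type} [Field K] {n : ℕ} (r : Word n → Word n → Prop)
    (J : TwoSidedIdeal (FA K n)) (G : Set (FA K n)) : Prop :=
  IsGB r J G ∧
  ∀ g ∈ G, ∀ g' ∈ G, g ≠ g' → ∀ m m', IsLeadWord r g m → IsLeadWord r g' m' →
    ¬ (FreeMonoid.toList m <:+: FreeMonoid.toList m')

/-- An element of `K⟨X_1,…,X_n⟩` is homogeneous of degree `d`. -/
def IsHomogOfDeg {K : Type} [Field K] {n : ℕ} (f : FA K n) (d : ℕ) : Prop :=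
  ∀ w ∈ f.coeff.support, (FreeMonoid.toList w).length = d

/-- `L ⊆ E(V)` is a monomial ideal: it is generated by square-free monomials. -/
def IsMonomialIdealE {K : Type} [Field K] {n : ℕ} (L : TwoSidedIdeal (EV K n)) : Prop :=
  ∃ S : Set (Finset (Fin n)), L = TwoSidedIdeal.span (xF K '' S)

/-- The set `U_L(m)` for `m = x_A`: square-free monomials `u` in the variables strictly
between `min A` and `max A` such that `u·(m/x_{min A}) ∉ L` and `u·(m/x_{max A}) ∉ L`. -/
noncomputable def UL {K : Type} [Field K] {n : ℕ} (L : TwoSidedIdeal (EV K n))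
    (A : Finset (Fin n)) : Set (Finset (Fin n)) :=
  { u | ∃ hA : A.Nonempty,
      (∀ i ∈ u, A.min' hA < i ∧ i < A.max' hA) ∧
      xF K u * xF K (A.erase (A.min' hA)) ∉ L ∧
      xF K u * xF K (A.erase (A.max' hA)) ∉ L }

/-- `x_A` is a minimal (monomial) generator of the monomial ideal `L`. -/
def IsMinGenE {K : Type} [Field K] {n : ℕ} (L : TwoSidedIdeal (EV K n))
    (A : Finset (Fin n)) : Prop :=
  xF K A ∈ L ∧ ∀ B ⊆ A, B ≠ A → xF K B ∉ L

/-- `L` is squeezed: `U_L(m) = {1}` for every minimal generator `m` of `L`. -/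
def IsSqueezed {K : Type} [Field K] {n : ℕ} (L : TwoSidedIdeal (EV K n)) : Prop :=
  ∀ A : Finset (Fin n), IsMinGenE L A → UL L A = {∅}

/-- `L` is stable: if `m ∈ L` and `x_j` is the largest variable dividing `m`,
then `x_i·(m/x_j) ∈ L` for all `i ≤ j`. -/
def IsStableE {K : Type} [Field K] {n : ℕ} (L : TwoSidedIdeal (EV K n)) : Prop :=
  ∀ A : Finset (Fin n), ∀ hA : A.Nonempty, xF K A ∈ L →
    ∀ i ≤ A.max' hA, xF K {i} * xF K (A.erase (A.max' hA)) ∈ L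

/-- `L` is strongly stable: if `m ∈ L` and `x_j` divides `m`, then
`x_i·(m/x_j) ∈ L` for all `i ≤ j` with `x_i·(m/x_j) ≠ 0`. -/
def IsStronglyStableE {K : Type} [Field K] {n : ℕ} (L : TwoSidedIdeal (EV K n)) : Prop :=
  ∀ A : Finset (Fin n), xF K A ∈ L → ∀ j ∈ A, ∀ i ≤ j,
    xF K {i} * xF K (A.erase j) ≠ 0 → xF K {i} * xF K (A.erase j) ∈ L

/-- `δ` is the canonical `K`-linear section of `π`, sending `x_{i_1}⋯x_{i_r}` to
`X_{i_1}⋯X_{i_r}` for `i_1 < ⋯ < i_r`. -/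
def IsDeltaSection {K : Type} [Field K] {n : ℕ} (δ : EV K n →ₗ[K] FA K n) : Prop :=
  ∀ A : Finset (Fin n), δ (xF K A) = ofW K (wordOf A)

/-- `x_A` is the `≺_e`-leading monomial of `0 ≠ f ∈ E(V)`, computed via the canonical
representative `δ f`. -/
def IsLeadE {K : Type} [Field K] {n : ℕ} (es : (Fin n →₀ ℕ) → (Fin n →₀ ℕ) → Prop)
    (δ : EV K n →ₗ[K] FA K n) (f : EV K n) (A : Finset (Fin n)) : Prop :=
  wordOf A ∈ (δ f).coeff.support ∧
  ∀ w ∈ (δ f).coeff.support, w ≠ wordOf A → precE es (lettersOf w) A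

/-- The initial ideal `in_{≺_e}(I)` of an ideal `I ⊆ E(V)`. -/
noncomputable def inE {K : Type} [Field K] {n : ℕ}
    (es : (Fin n →₀ ℕ) → (Fin n →₀ ℕ) → Prop) (δ : EV K n →ₗ[K] FA K n)
    (I : TwoSidedIdeal (EV K n)) : TwoSidedIdeal (EV K n) :=
  TwoSidedIdeal.span { h | ∃ f A, f ∈ I ∧ f ≠ 0 ∧ IsLeadE es δ f A ∧ h = xF K A }

/-- `G` is a Gröbner basis of `I ⊆ E(V)` w.r.t. `≺_e`. -/
def IsGBE {K : Type} [Field K] {n : ℕ} (es : (Fin n →₀ ℕ) → (Fin n →₀ ℕ) → Prop)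
    (δ : EV K n →ₗ[K] FA K n) (I : TwoSidedIdeal (EV K n)) (G : Set (EV K n)) : Prop :=
  (∀ g ∈ G, g ∈ I ∧ g ≠ 0) ∧
  TwoSidedIdeal.span { h | ∃ g ∈ G, ∃ A, IsLeadE es δ g A ∧ h = xF K A } = inE es δ I

/-- `G` is a minimal Gröbner basis of `I ⊆ E(V)` w.r.t. `≺_e`: moreover no leading
monomial of an element of `G` divides the leading monomial of another element. -/
def IsMinGBE {K : Type} [Field K] {n : ℕ} (es : (Fin n →₀ ℕ) → (Fin n →₀ ℕ) → Prop)
    (δ : EV K n →ₗ[K] FA K n) (I : TwoSidedIdeal (EV K n)) (G : Set (EV K n)) : Prop :=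
  IsGBE es δ I G ∧
  ∀ g ∈ G, ∀ g' ∈ G, g ≠ g' → ∀ A A', IsLeadE es δ g A → IsLeadE es δ g' A' → ¬ A ⊆ A'

/-- `I ⊆ E(V)` is a homogeneous ideal generated in degrees `≥ 2`: it is generated by
images of homogeneous elements of degree `≥ 2`. -/
def IsHomogGenInDegGE2 {K : Type} [Field K] {n : ℕ} (I : TwoSidedIdeal (EV K n)) : Prop :=
  ∃ S : Set (FA K n), (∀ f ∈ S, ∃ d, 2 ≤ d ∧ IsHomogOfDeg f d) ∧
    I = TwoSidedIdeal.span (piE K n '' S)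

/-- The action of an `n × n` matrix `g` on `K⟨X_1,…,X_n⟩` by the algebra endomorphism
determined by `X_i ↦ Σ_ℓ g_{ℓi} X_ℓ`. -/
noncomputable def actFA (K : Type) [Field K] {n : ℕ} (g : Matrix (Fin n) (Fin n) K) :
    FA K n →ₐ[K] FA K n :=
  MonoidAlgebra.lift K (FA K n) (Word n)
    (FreeMonoid.lift fun i => ∑ l : Fin n, g l i • Xv K l)

/-- The degree-`d` homogeneous component of a two-sided ideal of `K⟨X_1,…,X_n⟩`,
as a `K`-subspace. -/
def degComp {K : Type} [Field K] {n : ℕ} (c : TwoSidedIdeal (FA K n)) (d : ℕ) :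
    Submodule K (FA K n) where
  carrier := {f | f ∈ c ∧ IsHomogOfDeg f d}
  add_mem' := fun {a b} ha hb => ⟨c.add_mem ha.1 hb.1, fun w hw => by
    classical
    rcases Finset.mem_union.1 (Finsupp.support_add (show w ∈ (a.coeff + b.coeff).support from hw)) with h | h
    exacts [ha.2 w h, hb.2 w h]⟩
  zero_mem' := ⟨c.zero_mem, fun w hw => by simp at hw⟩
  smul_mem' := fun k f hf => ⟨by
      rw [Algebra.smul_def]
      exact c.mul_mem_left _ _ hf.1,
    fun w hw => hf.2 w (Finsupp.support_smul (show w ∈ (k • f.coeff).support from hw))⟩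

/-- A two-sided ideal of `K⟨X_1,…,X_n⟩` is homogeneous (for the grading by word length). -/
def IsHomogIdeal {K : Type} [Field K] {n : ℕ} (a : TwoSidedIdeal (FA K n)) : Prop :=
  ∀ f ∈ a, ∀ d : ℕ, MonoidAlgebra.ofCoeff (f.coeff.filter (fun w => (FreeMonoid.toList w).length = d)) ∈ a

/-- Evaluation of a polynomial in the matrix entries at an element of `GL_n(K)`. -/
noncomputable def evalGL {K : Type} [Field K] {n : ℕ}
    (p : MvPolynomial (Fin n × Fin n) K) (g : GL (Fin n) K) : K :=
  MvPolynomial.eval (fun q => (g : Matrix (Fin n) (Fin n) K) q.1 q.2) p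

/-- The image `g(a)` of a two-sided ideal under the action of a matrix `g`. -/
noncomputable def mapIdealFA (K : Type) [Field K] {n : ℕ} (g : Matrix (Fin n) (Fin n) K)
    (a : TwoSidedIdeal (FA K n)) : TwoSidedIdeal (FA K n) :=
  TwoSidedIdeal.span ((actFA K g) '' (a : Set (FA K n)))

/-- `b` is the generic initial ideal of `a` w.r.t. the order `r`: `b` is a monomial
ideal and there is a countable family of nonempty basic Zariski-open subsets of
`GL_n(K)` on whose (F_δ) intersection `in_r(g(a)) = b`. -/
def IsGin {K : Type} [Field K] {n : ℕ} (r : Word n → Word n → Prop)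
    (a b : TwoSidedIdeal (FA K n)) : Prop :=
  (∃ S : Set (Word n), b = TwoSidedIdeal.span (ofW K '' S)) ∧
  ∃ ps : ℕ → MvPolynomial (Fin n × Fin n) K,
    (∀ k, ∃ g : GL (Fin n) K, evalGL (ps k) g ≠ 0) ∧
    (∃ g : GL (Fin n) K, ∀ k, evalGL (ps k) g ≠ 0) ∧
    ∀ g : GL (Fin n) K, (∀ k, evalGL (ps k) g ≠ 0) →
      inIdeal r (mapIdealFA K (↑g) a) = b

/-- `bE` is the generic initial ideal of the ideal `I ⊆ E(V)` w.r.t. `≺_e`. -/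
def IsGinE {K : Type} [Field K] {n : ℕ} (es : (Fin n →₀ ℕ) → (Fin n →₀ ℕ) → Prop)
    (δ : EV K n →ₗ[K] FA K n) (I bE : TwoSidedIdeal (EV K n)) : Prop :=
  IsMonomialIdealE bE ∧
  ∃ ps : ℕ → MvPolynomial (Fin n × Fin n) K,
    (∀ k, ∃ g : GL (Fin n) K, evalGL (ps k) g ≠ 0) ∧
    (∃ g : GL (Fin n) K, ∀ k, evalGL (ps k) g ≠ 0) ∧
    ∀ g : GL (Fin n) K, (∀ k, evalGL (ps k) g ≠ 0) →
      ∀ gE : EV K n ≃+* EV K n, (∀ x, gE (piE K n x) = piE K n (actFA K (↑g) x)) →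
        inE es δ (TwoSidedIdeal.span (⇑gE '' (I : Set (EV K n)))) = bE


/-!
For `b ≤ a`, the word `X_a X_b` is the `≺_t`-leading word of `X_a X_b + X_b X_a ∈ C ⊆ J`:
for `a = b` this element is `2 X_a²` (nonzero since `char K ≠ 2`), and for `b < a` both words
are square-free on the same letters, so degree-lexicographic order decides. A word with no
factor `X_a X_b`, `b ≤ a`, is strictly increasing, hence has length at most `n`. So
`in_{≺_t}(J)` contains every word of length `> n`, and is generated by its words of length
`< n + 2`, of which there are finitely many.
-/

theorem List.exists_descent_of_card_lt_length {α : Type*} [LinearOrder α]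
    [Fintype α] {l : List α} (hl : Fintype.card α < l.length) :
    ∃ l₁ a b l₂, l = l₁ ++ a :: b :: l₂ ∧ b ≤ a := by
  by_contra! h
  have hsorted : l.IsChain (· < ·) :=
    List.isChain_iff_forall_rel_of_append_cons_cons.2 fun a b l₁ l₂ hl => h l₁ a b l₂ hl
  have := (List.isChain_iff_pairwise.1 hsorted).nodup.length_le_card
  omega

theorem FreeMonoid.exists_descent_of_card_lt_length {α : Type*} [LinearOrder α]
    [Fintype α] {M : FreeMonoid α} (hM : Fintype.card α < M.toList.length) :
    ∃ (u v : FreeMonoid α) (a b : α), b ≤ a ∧ M = u * (of a * of b) * v := by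
  obtain ⟨l₁, a, b, l₂, hl, hba⟩ := List.exists_descent_of_card_lt_length hM
  refine ⟨ofList l₁, ofList l₂, a, b, hba, toList.injective ?_⟩
  simp [hl]

section

variable {K : Type} [Field K] {n : ℕ}

theorem ofW_mul (u v : Word n) : ofW K (u * v) = ofW K u * ofW K v :=
  map_mul (MonoidAlgebra.of K (Word n)) u v

theorem support_ofW (w : Word n) : (ofW K w).coeff.support = {w} := by
  rw [ofW, MonoidAlgebra.of_apply, MonoidAlgebra.coeff_single]
  exact Finsupp.support_single _ one_ne_zero

theorem Xv_mul_Xv (i j : Fin n) :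
    Xv K i * Xv K j = MonoidAlgebra.single (FreeMonoid.of i * FreeMonoid.of j) (1 : K) := by
  rw [Xv, Xv, ofW, ofW, ← map_mul, MonoidAlgebra.of_apply]

theorem ofW_mul_mul_mem {I : TwoSidedIdeal (FA K n)} {w : Word n} (hw : ofW K w ∈ I)
    (u v : Word n) : ofW K (u * w * v) ∈ I := by
  rw [ofW_mul, ofW_mul]
  exact I.mul_mem_right _ _ (I.mul_mem_left _ _ hw)

theorem isLeadWord_single (r : Word n → Word n → Prop) (w : Word n) {c : K} (hc : c ≠ 0) :
    IsLeadWord r (MonoidAlgebra.single w c) w := by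
  have hs : (MonoidAlgebra.single w c).coeff.support = {w} := by
    rw [MonoidAlgebra.coeff_single]
    exact Finsupp.support_single _ hc
  exact ⟨hs ▸ Finset.mem_singleton_self w,
    fun m hm hne => absurd (Finset.mem_singleton.1 (hs ▸ hm)) hne⟩

theorem isLeadWord_single_add_single {r : Word n → Word n → Prop} {w' w : Word n}
    (hr : r w' w) (hne : w' ≠ w) (c' : K) {c : K} (hc : c ≠ 0) :
    IsLeadWord r (MonoidAlgebra.single w' c' + MonoidAlgebra.single w c) w := by
  classical
  simp only [IsLeadWord, MonoidAlgebra.coeff_add, MonoidAlgebra.coeff_single]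
  refine ⟨by simp [hne, hc], fun m hm hm' => ?_⟩
  rcases Finset.mem_union.1 (Finsupp.support_add hm) with h | h
  · rwa [Finset.mem_singleton.1 (Finsupp.support_single_subset h)]
  · exact absurd (Finset.mem_singleton.1 (Finsupp.support_single_subset h)) hm'

theorem precT_of_mul_of_of_lt (es : (Fin n →₀ ℕ) → (Fin n →₀ ℕ) → Prop) {a b : Fin n}
    (hba : b < a) :
    precT es (FreeMonoid.of b * FreeMonoid.of a) (FreeMonoid.of a * FreeMonoid.of b) := by
  have hsq : ∀ i j : Fin n, i ≠ j → SqFreeWord (FreeMonoid.of i * FreeMonoid.of j) := by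
    intro i j hij
    simp [SqFreeWord, hij]
  refine Or.inl ⟨hsq _ _ hba.ne, hsq _ _ hba.ne', Or.inr ⟨?_, Or.inr ⟨rfl, List.Lex.rel hba⟩⟩⟩
  simp [lettersOf, Finset.pair_comm]

theorem descent_mem_inIdeal (hchar : (2 : K) ≠ 0) (es : (Fin n →₀ ℕ) → (Fin n →₀ ℕ) → Prop)
    {J : TwoSidedIdeal (FA K n)} (hCJ : antiCommIdeal K n ≤ J) {a b : Fin n} (hba : b ≤ a) :
    ofW K (FreeMonoid.of a * FreeMonoid.of b) ∈ inIdeal (precT es) J := by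
  set f := Xv K b * Xv K a + Xv K a * Xv K b
  have hfJ : f ∈ J := hCJ (TwoSidedIdeal.subset_span ⟨b, a, hba, rfl⟩)
  have hlead : IsLeadWord (precT es) f (FreeMonoid.of a * FreeMonoid.of b) := by
    simp only [f, Xv_mul_Xv]
    rcases hba.eq_or_lt with rfl | hlt
    · rw [← MonoidAlgebra.single_add, one_add_one_eq_two]
      exact isLeadWord_single _ _ hchar
    · refine isLeadWord_single_add_single (precT_of_mul_of_of_lt es hlt) (fun h => ?_) _ one_ne_zero
      have := congrArg FreeMonoid.toList h
      simp only [FreeMonoid.toList_mul, FreeMonoid.toList_of, List.singleton_append,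
        List.cons.injEq] at this
      exact hlt.ne this.1
  have hf0 : f ≠ 0 := by
    intro hf
    simpa [hf] using hlead.1
  exact TwoSidedIdeal.subset_span ⟨f, _, hfJ, hf0, hlead, rfl⟩

theorem inIdeal_eq_span_image_ofW (r : Word n → Word n → Prop) (J : TwoSidedIdeal (FA K n)) :
    inIdeal r J =
      TwoSidedIdeal.span (ofW K '' {m | ∃ f, f ∈ J ∧ f ≠ 0 ∧ IsLeadWord r f m}) := by
  rw [inIdeal]
  congr 1
  ext g
  constructor
  · rintro ⟨f, m, hfJ, hf0, hm, rfl⟩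
    exact ⟨m, ⟨f, hfJ, hf0, hm⟩, rfl⟩
  · rintro ⟨m, ⟨f, hfJ, hf0, hm⟩, rfl⟩
    exact ⟨f, m, hfJ, hf0, hm, rfl⟩

section Descents

variable {I : TwoSidedIdeal (FA K n)}
  (hI : ∀ a b : Fin n, b ≤ a → ofW K (FreeMonoid.of a * FreeMonoid.of b) ∈ I)
include hI

theorem ofW_mem_of_lt_length {M : Word n} (hM : n < M.toList.length) : ofW K M ∈ I := by
  obtain ⟨u, v, a, b, hba, rfl⟩ :=
    FreeMonoid.exists_descent_of_card_lt_length (M := M) (by rwa [Fintype.card_fin])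
  exact ofW_mul_mul_mem (hI a b hba) u v

theorem eq_span_short_words_of_eq_span {G : Set (Word n)}
    (hG : I = TwoSidedIdeal.span (ofW K '' G)) {d : ℕ} (h2d : 2 < d) (hnd : n < d) :
    I = TwoSidedIdeal.span (ofW K '' {m | m.toList.length < d ∧ ofW K m ∈ I}) := by
  refine le_antisymm ?_ (TwoSidedIdeal.span_le.2 (by rintro _ ⟨m, hm, rfl⟩; exact hm.2))
  have hsub : ∀ m : Word n, m.toList.length < d → ofW K m ∈ I →
      ofW K m ∈ TwoSidedIdeal.span (ofW K '' {m | m.toList.length < d ∧ ofW K m ∈ I}) :=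
    fun m hm hmI => TwoSidedIdeal.subset_span ⟨m, ⟨hm, hmI⟩, rfl⟩
  conv_lhs => rw [hG]
  rw [TwoSidedIdeal.span_le]
  rintro _ ⟨m, hm, rfl⟩
  have hmI : ofW K m ∈ I := hG ▸ TwoSidedIdeal.subset_span ⟨m, hm, rfl⟩
  by_cases hmd : m.toList.length < d
  · exact hsub m hmd hmI
  · obtain ⟨u, v, a, b, hba, rfl⟩ :=
      FreeMonoid.exists_descent_of_card_lt_length (M := m) (by rw [Fintype.card_fin]; omega)
    exact ofW_mul_mul_mem (hsub _ (by simpa using h2d) (hI a b hba)) u v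

end Descents

end

theorem initial_ideal_fg_of_contains_antiComm_general (K : Type) [Field K] (hchar : (2 : K) ≠ 0)
    (n : ℕ) (hn : 1 ≤ n)
    (es : (Fin n →₀ ℕ) → (Fin n →₀ ℕ) → Prop)
    (J : TwoSidedIdeal (FA K n)) (hCJ : antiCommIdeal K n ≤ J) :
    ∃ d : ℕ,
      (∀ M : Word n, d ≤ (FreeMonoid.toList M).length →
        ofW K M ∈ inIdeal (precT es) J) ∧
      inIdeal (precT es) J =
        TwoSidedIdeal.span
          { f | f ∈ inIdeal (precT es) J ∧
              ∀ w ∈ f.coeff.support, (FreeMonoid.toList w).length < d } ∧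
      ∃ S : Finset (FA K n), inIdeal (precT es) J = TwoSidedIdeal.span (↑S : Set (FA K n)) := by
  set I := inIdeal (precT es) J
  have hdesc : ∀ a b : Fin n, b ≤ a → ofW K (FreeMonoid.of a * FreeMonoid.of b) ∈ I :=
    fun _ _ hba => descent_mem_inIdeal hchar es hCJ hba
  have hshort : I = TwoSidedIdeal.span (ofW K '' {m | m.toList.length < n + 2 ∧ ofW K m ∈ I}) :=
    eq_span_short_words_of_eq_span hdesc (inIdeal_eq_span_image_ofW _ J) (by omega) (by omega)
  have hfin : {m : Word n | m.toList.length < n + 2 ∧ ofW K m ∈ I}.Finite :=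
    ((List.finite_length_lt (Fin n) (n + 2)).preimage
      FreeMonoid.toList.injective.injOn).subset fun _ hm => hm.1
  refine ⟨n + 2, fun M hM => ofW_mem_of_lt_length hdesc (M := M) (by omega), ?_,
    (hfin.image (ofW K)).toFinset, by rwa [Set.Finite.coe_toFinset]⟩
  refine le_antisymm (hshort.le.trans (TwoSidedIdeal.span_mono ?_))
    (TwoSidedIdeal.span_le.2 fun _ hf => hf.1)
  rintro _ ⟨m, hm, rfl⟩
  refine ⟨hm.2, fun w hw => ?_⟩
  rw [support_ofW, Finset.mem_singleton] at hw
  exact hw ▸ hm.1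

/-- Let `J ⊆ K⟨X_1,…,X_n⟩` be any two-sided ideal containing the
anti-commutator ideal `C`.  Then there exists `d ≥ 0` such that `in_{≺_t}(J)` contains
every word of length `≥ d`; consequently `in_{≺_t}(J)` is generated by its elements of
degree `< d`, and is finitely generated. -/
theorem initial_ideal_fg_of_contains_antiComm (K : Type) [Field K] (hchar : (2 : K) ≠ 0)
    (n : ℕ) (hn : 1 ≤ n)
    (es : (Fin n →₀ ℕ) → (Fin n →₀ ℕ) → Prop) (hes : IsCommMonoidWellOrder n es)
    (J : TwoSidedIdeal (FA K n)) (hCJ : antiCommIdeal K n ≤ J) :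
    ∃ d : ℕ,
      (∀ M : Word n, d ≤ (FreeMonoid.toList M).length →
        ofW K M ∈ inIdeal (precT es) J) ∧
      inIdeal (precT es) J =
        TwoSidedIdeal.span
          { f | f ∈ inIdeal (precT es) J ∧
              ∀ w ∈ f.coeff.support, (FreeMonoid.toList w).length < d } ∧
      ∃ S : Finset (FA K n), inIdeal (precT es) J = TwoSidedIdeal.span (↑S : Set (FA K n)) :=
  initial_ideal_fg_of_contains_antiComm_general K hchar n hn es J hCJ
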